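/- arXiv:2109.06656 — 3 statements merged into one kernel-verified Lean document; each statement's English description precedes it below -/
import Mathlib

section
/- For any two information structures u, v on K × C × D (finite sets, u and v probability distributions), and any zero-sum payoff function g : K × I × J → [-1,1] with finite action sets, the difference of values satisfies |val(u,g) - val(v,g)| ≤ ‖u - v‖₁, where ‖u - v‖₁ = Σ_{k,c,d} |u(k,c,d) - v(k,c,d)|. -/
open scoped BigOperators

noncomputable section

/-- A probability distribution on a finite type, given as a nonnegative function summing to 1. -/
def IsDist {α : Type*} [Fintype α] (u : α → ℝ) : Prop :=
  (∀ a, 0 ≤ u a) ∧ ∑ a, u a = 1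

/-- A garbling (stochastic map / behavioral strategy). -/
def IsKernel {α β : Type*} [Fintype β] (q : α → β → ℝ) : Prop :=
  ∀ a, IsDist (q a)

/-- Expected payoff in the zero-sum Bayesian game `Γ(u,g)` when players use
behavioral strategies `σ` and `τ`. -/
def pay {K C D I J : Type*} [Fintype K] [Fintype C] [Fintype D] [Fintype I] [Fintype J]
    (u : K × C × D → ℝ) (g : K → I → J → ℝ) (σ : C → I → ℝ) (τ : D → J → ℝ) : ℝ :=
  ∑ k, ∑ c, ∑ d, ∑ i, ∑ j, u (k, c, d) * σ c i * τ d j * g k i j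

/-- The value (maxmin) of the zero-sum Bayesian game `Γ(u,g)`, player 1 maximizing. -/
def gameVal {K C D I J : Type*} [Fintype K] [Fintype C] [Fintype D] [Fintype I] [Fintype J]
    (u : K × C × D → ℝ) (g : K → I → J → ℝ) : ℝ :=
  sSup {x : ℝ | ∃ σ : C → I → ℝ, IsKernel σ ∧
    x = sInf {y : ℝ | ∃ τ : D → J → ℝ, IsKernel τ ∧ y = pay u g σ τ}}

/-- Garbling of player 1's signal: `(q.u)(k,c,d) = ∑ c', u(k,c',d) q(c|c')`. -/
def garbleL {K C C' D : Type*} [Fintype C] (q : C → C' → ℝ) (u : K × C × D → ℝ) :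
    K × C' × D → ℝ :=
  fun x => ∑ c, u (x.1, c, x.2.2) * q c x.2.1

/-- Garbling of player 2's signal: `(u.q)(k,c,d) = ∑ d', u(k,c,d') q(d|d')`. -/
def garbleR {K C D D' : Type*} [Fintype D] (q : D → D' → ℝ) (u : K × C × D → ℝ) :
    K × C × D' → ℝ :=
  fun x => ∑ d, u (x.1, x.2.1, d) * q d x.2.2

/-- ℓ¹ distance. -/
def l1 {α : Type*} [Fintype α] (u v : α → ℝ) : ℝ := ∑ a, |u a - v a|

/-- Payoff functions bounded by 1. -/
def Bounded1 {K I J : Type*} (g : K → I → J → ℝ) : Prop := ∀ k i j, |g k i j| ≤ 1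

/-- The value-based distance: sup over all finite zero-sum games (with nonempty
finite action sets, payoffs bounded by 1) of the absolute difference of values. -/
def valueDist {K C D C' D' : Type*} [Fintype K] [Fintype C] [Fintype D] [Fintype C'] [Fintype D']
    (u : K × C × D → ℝ) (v : K × C' × D' → ℝ) : ℝ :=
  sSup {x : ℝ | ∃ (m n : ℕ) (g : K → Fin (m + 1) → Fin (n + 1) → ℝ),
    Bounded1 g ∧ x = |gameVal u g - gameVal v g|}

/-- Value of a single-agent decision problem on a single-agent information structure. -/
def val1 {K C I : Type*} [Fintype K] [Fintype C] [Fintype I] [Nonempty I]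
    (u : K × C → ℝ) (g : K → I → ℝ) : ℝ :=
  ∑ c, ⨆ i, ∑ k, u (k, c) * g k i

/-- The single-agent value-based distance. -/
def valueDist1 {K C C' : Type*} [Fintype K] [Fintype C] [Fintype C']
    (u : K × C → ℝ) (v : K × C' → ℝ) : ℝ :=
  sSup {x : ℝ | ∃ (m : ℕ) (g : K → Fin (m + 1) → ℝ),
    (∀ k i, |g k i| ≤ 1) ∧ x = |val1 u g - val1 v g|}

/-- Garbling of the signal in a single-agent structure. -/
def garble1 {K C C' : Type*} [Fintype C] (q : C → C' → ℝ) (u : K × C → ℝ) : K × C' → ℝ :=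
  fun x => ∑ c, u (x.1, c) * q c x.2

end

/-! For fixed strategies the payoff is linear in the information structure and, being an average
of payoffs bounded by 1, is bounded by `∑ x, |w x|`; so `pay u g σ τ` and `pay v g σ τ` differ by
at most `l1 u v` uniformly in `σ, τ`, and taking sup-inf preserves a uniform bound on the
difference. -/

-- `gameVal u g` unfolds to `maxmin IsKernel IsKernel (pay u g)`.
noncomputable def maxmin {α β : Type*} (P : α → Prop) (Q : β → Prop) (f : α → β → ℝ) : ℝ :=
  sSup {x : ℝ | ∃ a, P a ∧ x = sInf {y : ℝ | ∃ b, Q b ∧ y = f a b}}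

section maxmin

theorem bddBelow_setOf_of_abs_le {β : Type*} {Q : β → Prop} {h : β → ℝ} {M : ℝ}
    (hM : ∀ b, Q b → |h b| ≤ M) : BddBelow {y : ℝ | ∃ b, Q b ∧ y = h b} :=
  ⟨-M, by rintro _ ⟨b, hb, rfl⟩; linarith [(abs_le.mp (hM b hb)).1]⟩

variable {α β : Type*} {P : α → Prop} {Q : β → Prop} {f f' : α → β → ℝ} {M M' ε : ℝ}

theorem maxmin_le_maxmin_add (hP : ∃ a, P a) (hQ : ∃ b, Q b)
    (hf : ∀ a b, P a → Q b → |f a b| ≤ M) (hf' : ∀ a b, P a → Q b → |f' a b| ≤ M')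
    (hε : ∀ a b, P a → Q b → |f a b - f' a b| ≤ ε) :
    maxmin P Q f ≤ maxmin P Q f' + ε := by
  obtain ⟨a₀, ha₀⟩ := hP
  obtain ⟨b₀, hb₀⟩ := hQ
  have inf_le : ∀ a, P a → ∀ b, Q b →
      sInf {y : ℝ | ∃ b, Q b ∧ y = f a b} ≤ f a b := fun a ha b hb =>
    csInf_le (bddBelow_setOf_of_abs_le fun b hb => hf a b ha hb) ⟨b, hb, rfl⟩
  have inf_sub_le : ∀ a, P a → sInf {y : ℝ | ∃ b, Q b ∧ y = f a b} - ε ≤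
      sInf {y : ℝ | ∃ b, Q b ∧ y = f' a b} := by
    intro a ha
    refine le_csInf ⟨_, b₀, hb₀, rfl⟩ ?_
    rintro _ ⟨b, hb, rfl⟩
    linarith [inf_le a ha b hb, (abs_le.mp (hε a b ha hb)).2]
  have inf'_le_maxmin : ∀ a, P a → sInf {y : ℝ | ∃ b, Q b ∧ y = f' a b} ≤ maxmin P Q f' := by
    refine fun a ha => le_csSup ⟨M', ?_⟩ ⟨a, ha, rfl⟩
    rintro _ ⟨a', ha', rfl⟩
    exact (csInf_le (bddBelow_setOf_of_abs_le fun b hb => hf' a' b ha' hb)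
      ⟨b₀, hb₀, rfl⟩).trans (abs_le.mp (hf' a' b₀ ha' hb₀)).2
  refine csSup_le ⟨_, a₀, ha₀, rfl⟩ ?_
  rintro _ ⟨a, ha, rfl⟩
  linarith [inf_sub_le a ha, inf'_le_maxmin a ha]

theorem abs_maxmin_sub_maxmin_le (hP : ∃ a, P a) (hQ : ∃ b, Q b)
    (hf : ∀ a b, P a → Q b → |f a b| ≤ M) (hf' : ∀ a b, P a → Q b → |f' a b| ≤ M')
    (hε : ∀ a b, P a → Q b → |f a b - f' a b| ≤ ε) :
    |maxmin P Q f - maxmin P Q f'| ≤ ε := by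
  have hε' : ∀ a b, P a → Q b → |f' a b - f a b| ≤ ε := fun a b ha hb =>
    abs_sub_comm (f a b) (f' a b) ▸ hε a b ha hb
  rw [abs_sub_le_iff]
  constructor
  · linarith [maxmin_le_maxmin_add hP hQ hf hf' hε]
  · linarith [maxmin_le_maxmin_add hP hQ hf' hf hε']

end maxmin

theorem exists_isKernel (α : Type*) {β : Type*} [Fintype β] [Nonempty β] :
    ∃ q : α → β → ℝ, IsKernel q := by
  classical
  exact ⟨fun _ b => if b = Classical.arbitrary β then 1 else 0,
    fun _ => ⟨fun _ => by positivity, by simp⟩⟩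

theorem abs_sum_sum_mul_le_one {I J : Type*} [Fintype I] [Fintype J] {p : I → ℝ} {q : J → ℝ}
    (hp : IsDist p) (hq : IsDist q) {h : I → J → ℝ} (hh : ∀ i j, |h i j| ≤ 1) :
    |∑ i, ∑ j, p i * q j * h i j| ≤ 1 := by
  calc |∑ i, ∑ j, p i * q j * h i j|
      ≤ ∑ i, ∑ j, p i * q j := by
        refine (Finset.abs_sum_le_sum_abs _ _).trans (Finset.sum_le_sum fun i _ => ?_)
        refine (Finset.abs_sum_le_sum_abs _ _).trans (Finset.sum_le_sum fun j _ => ?_)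
        rw [abs_mul, abs_of_nonneg (mul_nonneg (hp.1 i) (hq.1 j))]
        exact mul_le_of_le_one_right (mul_nonneg (hp.1 i) (hq.1 j)) (hh i j)
    _ = 1 := by rw [← Finset.sum_mul_sum, hp.2, hq.2, one_mul]

section pay

variable {K C D I J : Type*} [Fintype K] [Fintype C] [Fintype D] [Fintype I] [Fintype J]

theorem pay_eq_sum_mul (w : K × C × D → ℝ) (g : K → I → J → ℝ) (σ : C → I → ℝ)
    (τ : D → J → ℝ) :
    pay w g σ τ = ∑ x, w x * ∑ i, ∑ j, σ x.2.1 i * τ x.2.2 j * g x.1 i j := by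
  simp only [pay, Fintype.sum_prod_type, Finset.mul_sum, mul_assoc]

theorem abs_pay_le {g : K → I → J → ℝ} (hg : Bounded1 g) {σ : C → I → ℝ} {τ : D → J → ℝ}
    (hσ : IsKernel σ) (hτ : IsKernel τ) (w : K × C × D → ℝ) :
    |pay w g σ τ| ≤ ∑ x, |w x| := by
  rw [pay_eq_sum_mul]
  refine (Finset.abs_sum_le_sum_abs _ _).trans (Finset.sum_le_sum fun x _ => ?_)
  rw [abs_mul]
  exact mul_le_of_le_one_right (abs_nonneg _)
    (abs_sum_sum_mul_le_one (hσ x.2.1) (hτ x.2.2) (hg x.1))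

theorem pay_sub (u v : K × C × D → ℝ) (g : K → I → J → ℝ) (σ : C → I → ℝ) (τ : D → J → ℝ) :
    pay u g σ τ - pay v g σ τ = pay (u - v) g σ τ := by
  simp only [pay, Pi.sub_apply, sub_mul, Finset.sum_sub_distrib]

end pay

theorem stmt0_general {K C D I J : Type*} [Fintype K] [Fintype C] [Fintype D]
    [Fintype I] [Nonempty I] [Fintype J] [Nonempty J]
    (u v : K × C × D → ℝ)
    (g : K → I → J → ℝ) (hg : Bounded1 g) :
    |gameVal u g - gameVal v g| ≤ l1 u v :=
  abs_maxmin_sub_maxmin_le (exists_isKernel C) (exists_isKernel D)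
    (fun _ _ hσ hτ => abs_pay_le hg hσ hτ u) (fun _ _ hσ hτ => abs_pay_le hg hσ hτ v)
    (fun _ _ hσ hτ => (pay_sub u v g _ _).symm ▸ abs_pay_le hg hσ hτ (u - v))

theorem stmt0 {K C D I J : Type*} [Fintype K] [Fintype C] [Fintype D]
    [Fintype I] [Nonempty I] [Fintype J] [Nonempty J]
    (u v : K × C × D → ℝ) (hu : IsDist u) (hv : IsDist v)
    (g : K → I → J → ℝ) (hg : Bounded1 g) :
    |gameVal u g - gameVal v g| ≤ l1 u v :=
  stmt0_general u v g hg
end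

section
/- Suppose u, v ∈ Δ(K × C × D) are finite information structures with conditionally independent signals (under each, c and d are independent given k) and equal marginals on K × D. Then the value-based distance d(u,v) over all finite zero-sum games equals the distance d₁(u,v) over single-agent problems of player 1, i.e. sup_{g ∈ G} |val(u,g) - val(v,g)| = sup_{g ∈ G₁} |val(u,g) - val(v,g)| where G₁ are payoff functions where player 2's action set is a singleton. -/
open scoped BigOperators

/-! Fix a game `g` and, by Sion's minimax theorem, an optimal strategy `τ` of player 2 in
`Γ(v, g)`. Since the signals are conditionally independent given `k`, against `τ` player 1 faces
the single-agent problem `g'(k, i)` obtained by averaging `g(k, i, ·)` over `τ` and the conditional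
law of `d` given `k`; as `u` and `v` have the same `K × D` marginal, this `g'` is the same for both.
Player 2 may play `τ` in `Γ(u, g)`, so `val(u, g) ≤ val(u, g')`, while `val(v, g') ≤ val(v, g)`
because `τ` is optimal in `Γ(v, g)`. Hence the gap of values on `g` is at most the gap on `g'`. -/

open Finset

section Kernels

variable {α β : Type*} [Fintype β]

theorem setOf_isKernel_eq_pi :
    {q : α → β → ℝ | IsKernel q} = Set.univ.pi fun _ => stdSimplex ℝ β := by
  ext q
  simp [IsKernel, IsDist, stdSimplex]

theorem isCompact_setOf_isKernel : IsCompact {q : α → β → ℝ | IsKernel q} := by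
  rw [setOf_isKernel_eq_pi]
  exact isCompact_univ_pi fun _ => isCompact_stdSimplex ℝ β

theorem convex_setOf_isKernel : Convex ℝ {q : α → β → ℝ | IsKernel q} := by
  rw [setOf_isKernel_eq_pi]
  exact convex_pi fun _ _ => convex_stdSimplex ℝ β

theorem nonempty_setOf_isKernel [Nonempty β] : {q : α → β → ℝ | IsKernel q}.Nonempty := by
  classical
  rw [setOf_isKernel_eq_pi]
  exact Set.univ_pi_nonempty_iff.2 fun _ => ⟨_, single_mem_stdSimplex ℝ (Classical.arbitrary β)⟩

theorem IsKernel.eq_one [Unique β] {q : α → β → ℝ} (hq : IsKernel q) : q = fun _ _ => 1 := by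
  funext a b
  simpa [Subsingleton.elim b default] using (hq a).2

end Kernels

theorem abs_sum_mul_le_sum {ι : Type*} [Fintype ι] {a x : ι → ℝ} (ha : ∀ i, 0 ≤ a i)
    (hx : ∀ i, |x i| ≤ 1) : |∑ i, a i * x i| ≤ ∑ i, a i :=
  (abs_sum_le_sum_abs _ _).trans <| sum_le_sum fun i _ => by
    rw [abs_mul, abs_of_nonneg (ha i)]
    exact mul_le_of_le_one_right (ha i) (hx i)

section Games

variable {K C D I J : Type*}

section Payoff

variable [Fintype K] [Fintype C] [Fintype D] [Fintype I] [Fintype J]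

theorem pay_eq_sum (u : K × C × D → ℝ) (g : K → I → J → ℝ) (σ : C → I → ℝ) (τ : D → J → ℝ) :
    pay u g σ τ = ∑ k, ∑ c, ∑ d, u (k, c, d) * ∑ i, σ c i * ∑ j, τ d j * g k i j := by
  simp only [pay, mul_sum, mul_assoc]

def payBilin (u : K × C × D → ℝ) (g : K → I → J → ℝ) :
    (C → I → ℝ) →ₗ[ℝ] (D → J → ℝ) →ₗ[ℝ] ℝ :=
  LinearMap.mk₂ ℝ (pay u g)
    (fun _ _ _ => by simp only [pay_eq_sum, Pi.add_apply, add_mul, mul_add, sum_add_distrib])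
    (fun _ _ _ => by simp only [pay_eq_sum, Pi.smul_apply, smul_eq_mul, mul_sum, mul_assoc,
      mul_left_comm])
    (fun _ _ _ => by simp only [pay_eq_sum, Pi.add_apply, add_mul, mul_add, sum_add_distrib])
    (fun _ _ _ => by simp only [pay_eq_sum, Pi.smul_apply, smul_eq_mul, mul_sum, mul_assoc,
      mul_left_comm])

theorem continuous_pay_left (u : K × C × D → ℝ) (g : K → I → J → ℝ) (τ : D → J → ℝ) :
    Continuous fun σ => pay u g σ τ :=
  ((payBilin u g).flip τ).continuous_of_finiteDimensional

theorem continuous_pay_right (u : K × C × D → ℝ) (g : K → I → J → ℝ) (σ : C → I → ℝ) :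
    Continuous fun τ => pay u g σ τ :=
  (payBilin u g σ).continuous_of_finiteDimensional

theorem abs_pay_le_one {u : K × C × D → ℝ} {g : K → I → J → ℝ} (hu : IsDist u) (hg : Bounded1 g)
    {σ : C → I → ℝ} (hσ : IsKernel σ) {τ : D → J → ℝ} (hτ : IsKernel τ) : |pay u g σ τ| ≤ 1 := by
  have hinner : ∀ k c d, |∑ i, σ c i * ∑ j, τ d j * g k i j| ≤ 1 := fun k c d =>
    (abs_sum_mul_le_sum (hσ c).1 fun i =>
      (abs_sum_mul_le_sum (hτ d).1 (hg k i)).trans_eq (hτ d).2).trans_eq (hσ c).2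
  have htotal : ∑ k, ∑ c, ∑ d, u (k, c, d) = 1 := by
    simpa only [Fintype.sum_prod_type] using hu.2
  rw [pay_eq_sum, ← htotal]
  exact (abs_sum_le_sum_abs _ _).trans <| sum_le_sum fun k _ =>
    (abs_sum_le_sum_abs _ _).trans <| sum_le_sum fun c _ =>
      abs_sum_mul_le_sum (fun d => hu.1 _) (hinner k c)

end Payoff

section GameValue

variable [Fintype K] [Fintype C] [Fintype D] [Fintype I] [Fintype J]
  {u : K × C × D → ℝ} {g : K → I → J → ℝ}

theorem gameVal_eq_sSup_image (u : K × C × D → ℝ) (g : K → I → J → ℝ) :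
    gameVal u g = sSup ((fun σ => sInf ((fun τ => pay u g σ τ) '' {τ | IsKernel τ}))
      '' {σ | IsKernel σ}) := by
  simp only [gameVal, Set.image, Set.mem_ofPred_eq, eq_comm]

theorem gameVal_le_of_forall_pay_le [Nonempty I] {τ : D → J → ℝ} (hτ : IsKernel τ) {z : ℝ}
    (h : ∀ σ, IsKernel σ → pay u g σ τ ≤ z) : gameVal u g ≤ z := by
  rw [gameVal_eq_sSup_image]
  refine csSup_le (nonempty_setOf_isKernel.image _) ?_
  rintro _ ⟨σ, hσ, rfl⟩
  have hbdd := (isCompact_setOf_isKernel.image (continuous_pay_right u g σ)).bddBelow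
  exact (csInf_le hbdd ⟨τ, hτ, rfl⟩).trans (h σ hσ)

theorem le_gameVal_of_forall_le_pay [Nonempty J] {σ : C → I → ℝ} (hσ : IsKernel σ) {z : ℝ}
    (h : ∀ τ, IsKernel τ → z ≤ pay u g σ τ) : z ≤ gameVal u g := by
  rw [gameVal_eq_sSup_image]
  obtain ⟨τ₀, hτ₀⟩ := nonempty_setOf_isKernel (α := D) (β := J)
  obtain ⟨M, hM⟩ := (isCompact_setOf_isKernel.image (continuous_pay_left u g τ₀)).bddAbove
  have hbdd : BddAbove ((fun σ => sInf ((fun τ => pay u g σ τ) '' {τ | IsKernel τ}))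
      '' {σ | IsKernel σ}) := by
    refine ⟨M, ?_⟩
    rintro _ ⟨σ', hσ', rfl⟩
    have hbdd' := (isCompact_setOf_isKernel.image (continuous_pay_right u g σ')).bddBelow
    exact (csInf_le hbdd' ⟨τ₀, hτ₀, rfl⟩).trans (hM ⟨σ', hσ', rfl⟩)
  refine le_csSup_of_le hbdd ⟨σ, hσ, rfl⟩ (le_csInf (nonempty_setOf_isKernel.image _) ?_)
  rintro _ ⟨τ, hτ, rfl⟩
  exact h τ hτ

theorem pay_le_gameVal_of_unique [Unique J] {σ : C → I → ℝ} (hσ : IsKernel σ)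
    {τ : D → J → ℝ} (hτ : IsKernel τ) : pay u g σ τ ≤ gameVal u g :=
  le_gameVal_of_forall_le_pay hσ fun τ' hτ' => by rw [hτ.eq_one, hτ'.eq_one]

theorem exists_isKernel_forall_pay_le_gameVal [Nonempty I] [Nonempty J] (u : K × C × D → ℝ)
    (g : K → I → J → ℝ) :
    ∃ τ : D → J → ℝ, IsKernel τ ∧ ∀ σ, IsKernel σ → pay u g σ τ ≤ gameVal u g := by
  obtain ⟨τ, hτ, σ, hσ, hsaddle⟩ := Sion.exists_isSaddlePointOn (f := fun τ σ => pay u g σ τ)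
    nonempty_setOf_isKernel convex_setOf_isKernel isCompact_setOf_isKernel
    (fun σ _ => (continuous_pay_right u g σ).continuousOn.lowerSemicontinuousOn)
    (fun σ _ => ((payBilin u g σ).convexOn convex_setOf_isKernel).quasiconvexOn)
    convex_setOf_isKernel nonempty_setOf_isKernel isCompact_setOf_isKernel
    (fun τ _ => (continuous_pay_left u g τ).continuousOn.upperSemicontinuousOn)
    (fun τ _ => (((payBilin u g).flip τ).concaveOn convex_setOf_isKernel).quasiconcaveOn)
  exact ⟨τ, hτ, fun σ' hσ' => le_gameVal_of_forall_le_pay hσ fun τ' hτ' =>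
    hsaddle τ' hτ' σ' hσ'⟩

theorem abs_gameVal_le_one [Nonempty I] [Nonempty J] (hu : IsDist u) (hg : Bounded1 g) :
    |gameVal u g| ≤ 1 := by
  obtain ⟨σ, hσ⟩ := nonempty_setOf_isKernel (α := C) (β := I)
  obtain ⟨τ, hτ⟩ := nonempty_setOf_isKernel (α := D) (β := J)
  exact abs_le.2 ⟨le_gameVal_of_forall_le_pay hσ fun τ' hτ' =>
      (abs_le.1 (abs_pay_le_one hu hg hσ hτ')).1,
    gameVal_le_of_forall_pay_le hτ fun σ' hσ' => (abs_le.1 (abs_pay_le_one hu hg hσ' hτ)).2⟩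

end GameValue

section CondIndep

variable [Fintype C] [Fintype D] [Fintype J]

theorem sum_mul_eq_sum_mul_condMean {w : C → D → ℝ} (hw : ∀ c d, 0 ≤ w c d)
    (hci : ∀ c d, w c d * ∑ c', ∑ d', w c' d' = (∑ d', w c d') * ∑ c', w c' d)
    (c : C) (F : D → ℝ) :
    ∑ d, w c d * F d = (∑ d, w c d) * ((∑ d, (∑ c', w c' d) * F d) / ∑ d, ∑ c', w c' d) := by
  rw [sum_comm (f := fun d c' => w c' d)]
  by_cases hW : ∑ c', ∑ d', w c' d' = 0
  · have hrow : ∑ d, w c d = 0 :=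
      (sum_eq_zero_iff_of_nonneg fun c' _ => sum_nonneg fun d _ => hw c' d).1 hW c (mem_univ c)
    have hzero : ∀ d, w c d = 0 := fun d =>
      (sum_eq_zero_iff_of_nonneg fun d _ => hw c d).1 hrow d (mem_univ d)
    simp [hzero]
  · calc ∑ d, w c d * F d
        = ∑ d, (∑ d', w c d') * ((∑ c', w c' d) * F d / ∑ c', ∑ d', w c' d') :=
          sum_congr rfl fun d _ => by rw [(eq_div_iff hW).2 (hci c d)]; ring
      _ = _ := by rw [← mul_sum, ← sum_div]

/-- The payoff of action `i` in state `k` once player 2's signal and action are averaged out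
under the conditional law of `d` given `k`; it is `0` on states of probability `0`. -/
noncomputable def condPayoff (u : K × C × D → ℝ) (g : K → I → J → ℝ)
    (τ : D → J → ℝ) : K → I → Fin 1 → ℝ :=
  fun k i _ => (∑ d, (∑ c, u (k, c, d)) * ∑ j, τ d j * g k i j) / ∑ d, ∑ c, u (k, c, d)

theorem condPayoff_congr {C' : Type*} [Fintype C'] {u : K × C × D → ℝ} {v : K × C' × D → ℝ}
    (hmarg : ∀ k d, ∑ c, u (k, c, d) = ∑ c, v (k, c, d)) (g : K → I → J → ℝ)
    (τ : D → J → ℝ) : condPayoff u g τ = condPayoff v g τ := by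
  funext k i _
  simp only [condPayoff, hmarg]

theorem bounded1_condPayoff {u : K × C × D → ℝ} (hu : ∀ x, 0 ≤ u x) {g : K → I → J → ℝ}
    (hg : Bounded1 g) {τ : D → J → ℝ} (hτ : IsKernel τ) : Bounded1 (condPayoff u g τ) := by
  intro k i _
  have hweight : ∀ d, 0 ≤ ∑ c, u (k, c, d) := fun d => sum_nonneg fun c _ => hu _
  rw [condPayoff, abs_div, abs_of_nonneg (sum_nonneg fun d _ => hweight d)]
  refine div_le_one_of_le₀ ?_ (sum_nonneg fun d _ => hweight d)
  exact abs_sum_mul_le_sum hweight fun d =>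
    (abs_sum_mul_le_sum (hτ d).1 (hg k i)).trans_eq (hτ d).2

theorem pay_eq_pay_condPayoff [Fintype K] [Fintype I] {u : K × C × D → ℝ} (hu : ∀ x, 0 ≤ u x)
    (hci : ∀ k c d, u (k, c, d) * (∑ c', ∑ d', u (k, c', d'))
      = (∑ d', u (k, c, d')) * (∑ c', u (k, c', d)))
    (g : K → I → J → ℝ) (σ : C → I → ℝ) (τ : D → J → ℝ) {τ₁ : D → Fin 1 → ℝ}
    (hτ₁ : IsKernel τ₁) : pay u g σ τ = pay u (condPayoff u g τ) σ τ₁ := by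
  rw [pay_eq_sum, pay_eq_sum, hτ₁.eq_one]
  refine sum_congr rfl fun k _ => sum_congr rfl fun c _ => ?_
  rw [sum_mul_eq_sum_mul_condMean (fun c d => hu (k, c, d)) (hci k) c, ← sum_mul]
  simp only [condPayoff, Fin.sum_univ_one, one_mul, mul_sum, sum_div]
  rw [sum_comm]
  exact sum_congr rfl fun i _ => sum_congr rfl fun d _ => sum_congr rfl fun j _ => by ring

end CondIndep

theorem exists_singleAgent_gameVal_sub_le [Fintype K] [Fintype C] [Fintype D] [Fintype I]
    [Fintype J] [Nonempty I] [Nonempty J] {C' : Type*} [Fintype C'] {u : K × C × D → ℝ}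
    {v : K × C' × D → ℝ} (hu : ∀ x, 0 ≤ u x) (hv : ∀ x, 0 ≤ v x)
    (hciu : ∀ k c d, u (k, c, d) * (∑ c', ∑ d', u (k, c', d'))
      = (∑ d', u (k, c, d')) * (∑ c', u (k, c', d)))
    (hciv : ∀ k c d, v (k, c, d) * (∑ c', ∑ d', v (k, c', d'))
      = (∑ d', v (k, c, d')) * (∑ c', v (k, c', d)))
    (hmarg : ∀ k d, ∑ c, u (k, c, d) = ∑ c, v (k, c, d))
    {g : K → I → J → ℝ} (hg : Bounded1 g) :
    ∃ g' : K → I → Fin 1 → ℝ, Bounded1 g' ∧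
      gameVal u g - gameVal v g ≤ gameVal u g' - gameVal v g' := by
  obtain ⟨τ, hτ, hτ_opt⟩ := exists_isKernel_forall_pay_le_gameVal v g
  obtain ⟨τ₁, hτ₁⟩ := nonempty_setOf_isKernel (α := D) (β := Fin 1)
  refine ⟨condPayoff u g τ, bounded1_condPayoff hu hg hτ, ?_⟩
  have hu_le : gameVal u g ≤ gameVal u (condPayoff u g τ) :=
    gameVal_le_of_forall_pay_le hτ fun σ hσ =>
      (pay_eq_pay_condPayoff hu hciu g σ τ hτ₁).trans_le (pay_le_gameVal_of_unique hσ hτ₁)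
  have hv_le : gameVal v (condPayoff u g τ) ≤ gameVal v g :=
    gameVal_le_of_forall_pay_le hτ₁ fun σ hσ => by
      rw [condPayoff_congr hmarg, ← pay_eq_pay_condPayoff hv hciv g σ τ hτ₁]
      exact hτ_opt σ hσ
  linarith

end Games

theorem stmt6 {K C D : Type*} [Fintype K] [Fintype C] [Fintype D]
    (u v : K × C × D → ℝ) (hu : IsDist u) (hv : IsDist v)
    (hciu : ∀ k c d, u (k, c, d) * (∑ c', ∑ d', u (k, c', d'))
      = (∑ d', u (k, c, d')) * (∑ c', u (k, c', d)))
    (hciv : ∀ k c d, v (k, c, d) * (∑ c', ∑ d', v (k, c', d'))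
      = (∑ d', v (k, c, d')) * (∑ c', v (k, c', d)))
    (hmarg : ∀ k d, ∑ c, u (k, c, d) = ∑ c, v (k, c, d)) :
    valueDist u v
      = sSup {x : ℝ | ∃ (m : ℕ) (g : K → Fin (m + 1) → Fin 1 → ℝ),
          Bounded1 g ∧ x = |gameVal u g - gameVal v g|} := by
  set R := {x : ℝ | ∃ (m : ℕ) (g : K → Fin (m + 1) → Fin 1 → ℝ),
    Bounded1 g ∧ x = |gameVal u g - gameVal v g|}
  have hgap : ∀ {m n : ℕ} {g : K → Fin (m + 1) → Fin (n + 1) → ℝ}, Bounded1 g →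
      |gameVal u g - gameVal v g| ≤ 2 := fun hg =>
    (abs_sub _ _).trans <| by linarith [abs_gameVal_le_one hu hg, abs_gameVal_le_one hv hg]
  have hR_bdd : BddAbove R := ⟨2, by rintro _ ⟨m, g, hg, rfl⟩; exact hgap hg⟩
  have hzero : Bounded1 fun (_ : K) (_ : Fin 1) (_ : Fin 1) => (0 : ℝ) := fun _ _ _ => by simp
  apply le_antisymm
  · refine csSup_le ⟨_, 0, 0, _, hzero, rfl⟩ ?_
    rintro _ ⟨m, n, g, hg, rfl⟩
    obtain ⟨g₁, hg₁, huv⟩ := exists_singleAgent_gameVal_sub_le hu.1 hv.1 hciu hciv hmarg hg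
    obtain ⟨g₂, hg₂, hvu⟩ := exists_singleAgent_gameVal_sub_le hv.1 hu.1 hciv hciu
      (fun k d => (hmarg k d).symm) hg
    have h₁ := le_csSup hR_bdd ⟨m, g₁, hg₁, rfl⟩
    have h₂ := le_csSup hR_bdd ⟨m, g₂, hg₂, rfl⟩
    rw [abs_sub_le_iff] at h₁ h₂ ⊢
    exact ⟨huv.trans h₁.1, hvu.trans h₂.2⟩
  · exact csSup_le_csSup ⟨2, by rintro _ ⟨m, n, g, hg, rfl⟩; exact hgap hg⟩
      ⟨_, 0, _, hzero, rfl⟩ fun _ ⟨m, g, hg, hx⟩ => ⟨m, 0, g, hg, hx⟩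
end

section
/- Let u' ∈ Δ(K × (K_C × C) × (K_D × D)) extend an ε-knowledge structure u by appending k_C = κ(c) and k_D = κ(d) to the players' signals. Then u'({k_C ≠ k or k_D ≠ k}) ≤ 4ε, and player 1's signal c is 16ε-conditionally independent from (k, k_D) given k_C under u'. -/
open scoped BigOperators

/-!
Off the diagonal `k_C = k_D = k` the extension `u'` only charges points where one of the
players' guesses `κ` is wrong. Under ε-knowledge such points have mass at most `2ε` per
player: the signals at which the conditional probability of the guess is below `1 - ε` carry
mass at most `ε`, and at the others the guess is wrong with conditional probability at most `ε`.

Hence, given `k_C`, the pair `(k, k_D)` equals `(k_C, k_C)` outside a set of mass `η ≤ 4ε`.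
A variable that is determined outside a set of mass `η` is `4η`-conditionally independent of
anything: both the joint law and the product of the conditional laws are within `2η` of the
law in which that variable is replaced by its determined value.
-/

open Finset

theorem sum_ite_eq_zero_eq_sub {ι M : Type*} [Fintype ι] [DecidableEq ι] [AddCommGroup M]
    (f : ι → M) (a : ι) : ∑ i, (if i = a then 0 else f i) = ∑ i, f i - f a := by
  rw [eq_sub_iff_add_eq, ← Fintype.sum_ite_eq' a f, ← sum_add_distrib]
  exact sum_congr rfl fun i _ => by split_ifs <;> simp

theorem sum_abs_sub_ite_sum {ι : Type*} [Fintype ι] [DecidableEq ι] {v : ι → ℝ}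
    (hv : ∀ i, 0 ≤ v i) (a : ι) :
    ∑ i, |v i - if i = a then ∑ j, v j else 0| = 2 * ∑ i, (if i = a then 0 else v i) := by
  set off := ∑ i, (if i = a then 0 else v i)
  have hoff : 0 ≤ off := sum_nonneg fun i _ => by split_ifs <;> simp [hv i]
  have htot : ∑ j, v j = v a + off := by simp only [off, sum_ite_eq_zero_eq_sub]; ring
  have hpt : ∀ i, |v i - if i = a then ∑ j, v j else 0|
      = (if i = a then off else 0) + (if i = a then 0 else v i) := by
    intro i
    split_ifs with h
    · rw [h, htot, sub_add_cancel_left, abs_neg, abs_of_nonneg hoff, add_zero]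
    · rw [sub_zero, abs_of_nonneg (hv i), zero_add]
  rw [sum_congr rfl fun i _ => hpt i, sum_add_distrib, Fintype.sum_ite_eq']
  ring

section Knowledge

variable {K S : Type*} [Fintype K] [Fintype S]

/-- `p k s` is the joint weight of the state `k` and the signal `s`; this is
`p(p(k = κ s | s) ≥ 1 - ε) ≥ 1 - ε` with the conditional probability multiplied out. -/
def EpsKnowledge (p : K → S → ℝ) (κ : S → K) (ε : ℝ) : Prop :=
  1 - ε ≤ ∑ s, if (1 - ε) * ∑ k, p k s ≤ p (κ s) s then ∑ k, p k s else 0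

theorem EpsKnowledge.sum_ite_eq_zero_le [DecidableEq K] {p : K → S → ℝ} {κ : S → K} {ε : ℝ}
    (h : EpsKnowledge p κ ε) (hp : ∀ k s, 0 ≤ p k s) (hsum : ∑ s, ∑ k, p k s = 1) :
    ∑ k, ∑ s, (if k = κ s then 0 else p k s) ≤ 2 * ε := by
  set good := fun s => if (1 - ε) * ∑ k, p k s ≤ p (κ s) s then ∑ k, p k s else 0
  have hgood : ∑ s, good s ≤ 1 := hsum ▸ sum_le_sum fun s _ => by
    dsimp only [good]; split_ifs <;> simp [sum_nonneg fun k _ => hp k s]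
  have hS : 1 - ε ≤ ∑ s, good s := h
  have hε : 0 ≤ ε := by linarith
  have hpt : ∀ s, ∑ k, (if k = κ s then 0 else p k s) ≤ ε * good s + (∑ k, p k s - good s) := by
    intro s
    rw [sum_ite_eq_zero_eq_sub]
    dsimp only [good]
    split_ifs <;> nlinarith [hp (κ s) s]
  calc ∑ k, ∑ s, (if k = κ s then 0 else p k s)
      = ∑ s, ∑ k, (if k = κ s then 0 else p k s) := sum_comm
    _ ≤ ∑ s, (ε * good s + (∑ k, p k s - good s)) := sum_le_sum fun s _ => hpt s
    _ = ε * ∑ s, good s + (1 - ∑ s, good s) := by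
      rw [sum_add_distrib, ← mul_sum, sum_sub_distrib, hsum]
    _ ≤ 2 * ε := by nlinarith [mul_le_mul_of_nonneg_left hgood hε]

end Knowledge

section ConditionalIndependence

variable {X Y Z : Type*} [Fintype X] [Fintype Y] [Fintype Z]

theorem sum_abs_sub_mul_div_le [DecidableEq Y] {ν : X → Y → ℝ} (hν : ∀ x y, 0 ≤ ν x y)
    (y₀ : Y) :
    ∑ x, ∑ y, |ν x y - (∑ y', ν x y') * (∑ x', ν x' y) / ∑ x', ∑ y', ν x' y'|
      ≤ 4 * ∑ x, ∑ y, (if y = y₀ then 0 else ν x y) := by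
  set off := ∑ x, ∑ y, (if y = y₀ then 0 else ν x y)
  set r := fun x => ∑ y, ν x y
  set c := fun y => ∑ x, ν x y
  set N := ∑ x, ∑ y, ν x y
  have hc : ∀ y, 0 ≤ c y := fun y => sum_nonneg fun x _ => hν x y
  have hN : 0 ≤ N := sum_nonneg fun x _ => sum_nonneg fun y _ => hν x y
  have hNc : N = ∑ y, c y := sum_comm
  -- where `N = 0`, `c y / N` is the junk value `0`; harmless, as then `c y = 0`
  have hcN : ∀ y, N = 0 → c y = 0 := fun y h0 =>
    le_antisymm (h0 ▸ hNc ▸ single_le_sum (fun y _ => hc y) (mem_univ y)) (hc y)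
  have hrows : ∑ x, ∑ y, |ν x y - if y = y₀ then r x else 0| = 2 * off := by
    rw [mul_sum]
    exact sum_congr rfl fun x _ => sum_abs_sub_ite_sum (hν x) y₀
  have hcols : ∑ x, ∑ y, r x * |(if y = y₀ then 1 else 0) - c y / N| = 2 * off := by
    have hpt : ∀ y, N * |(if y = y₀ then 1 else 0) - c y / N|
        = |c y - if y = y₀ then ∑ y', c y' else 0| := by
      intro y
      rw [← abs_of_nonneg hN, ← abs_mul, abs_of_nonneg hN, mul_sub, mul_div_cancel_of_imp' (hcN y),
        abs_sub_comm, ← hNc, mul_ite, mul_one, mul_zero]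
    rw [sum_comm, sum_congr rfl fun y _ => (sum_mul _ _ _).symm]
    change ∑ y, N * _ = _
    rw [sum_congr rfl fun y _ => hpt y, sum_abs_sub_ite_sum hc y₀]
    congr 1
    simp only [off, c, ite_zero_sum]
    exact sum_comm
  have hpt : ∀ x y, |ν x y - r x * c y / N|
      ≤ |ν x y - if y = y₀ then r x else 0| + r x * |(if y = y₀ then 1 else 0) - c y / N| := by
    intro x y
    have hr : 0 ≤ r x := sum_nonneg fun y _ => hν x y
    calc |ν x y - r x * c y / N|
        ≤ |ν x y - if y = y₀ then r x else 0| + |(if y = y₀ then r x else 0) - r x * c y / N| :=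
          abs_sub_le _ _ _
      _ = _ := by
        rw [← abs_of_nonneg hr, ← abs_mul, abs_of_nonneg hr, mul_sub, mul_ite, mul_one, mul_zero,
          mul_div_assoc]
  calc _ ≤ ∑ x, ∑ y, (|ν x y - if y = y₀ then r x else 0|
        + r x * |(if y = y₀ then 1 else 0) - c y / N|) :=
        sum_le_sum fun x _ => sum_le_sum fun y _ => hpt x y
    _ = 4 * off := by simp only [sum_add_distrib]; rw [hrows, hcols]; ring

/-- `μ z x y` is a joint law of `(z, x, y)`; `x` is `ε`-conditionally independent of `y` given
`z` iff `ciError μ ≤ ε` (the weight `μ(z)` is multiplied into the absolute value). -/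
noncomputable def ciError (μ : Z → X → Y → ℝ) : ℝ :=
  ∑ z, ∑ x, ∑ y, |μ z x y - (∑ y', μ z x y') * (∑ x', μ z x' y) / ∑ x', ∑ y', μ z x' y'|

theorem ciError_le [DecidableEq Y] {μ : Z → X → Y → ℝ} (hμ : ∀ z x y, 0 ≤ μ z x y) (f : Z → Y) :
    ciError μ ≤ 4 * ∑ z, ∑ x, ∑ y, (if y = f z then 0 else μ z x y) := by
  rw [mul_sum]
  exact sum_le_sum fun z _ => sum_abs_sub_mul_div_le (hμ z) (f z)

end ConditionalIndependence

section Extension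

variable {K C D : Type*} [Fintype K] [Fintype C] [Fintype D]

theorem IsDist.sum_ite_ne_or_ne_le [DecidableEq K] {u : K × C × D → ℝ} (hu : IsDist u)
    {ε : ℝ} {κC : C → K} {κD : D → K} (h1 : EpsKnowledge (fun k c => ∑ d, u (k, c, d)) κC ε)
    (h2 : EpsKnowledge (fun k d => ∑ c, u (k, c, d)) κD ε) :
    ∑ k, ∑ c, ∑ d, (if κC c ≠ k ∨ κD d ≠ k then u (k, c, d) else 0) ≤ 4 * ε := by
  obtain ⟨hnn, hsum⟩ := hu
  have hsum3 : ∑ k, ∑ c, ∑ d, u (k, c, d) = 1 := by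
    rw [← hsum]; simp only [Fintype.sum_prod_type]
  have hC := h1.sum_ite_eq_zero_le (fun k c => sum_nonneg fun d _ => hnn _)
    (by rw [sum_comm]; exact hsum3)
  have hD := h2.sum_ite_eq_zero_le (fun k d => sum_nonneg fun c _ => hnn _)
    (by rw [sum_comm, ← hsum3]; exact sum_congr rfl fun k _ => sum_comm)
  calc ∑ k, ∑ c, ∑ d, (if κC c ≠ k ∨ κD d ≠ k then u (k, c, d) else 0)
      ≤ ∑ k, ∑ c, ∑ d, ((if k = κC c then 0 else u (k, c, d))
          + (if k = κD d then 0 else u (k, c, d))) :=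
        sum_le_sum fun k _ => sum_le_sum fun c _ => sum_le_sum fun d _ => by
          have := hnn (k, c, d)
          split_ifs <;> grind
    _ = ∑ k, ∑ c, (if k = κC c then 0 else ∑ d, u (k, c, d))
          + ∑ k, ∑ d, (if k = κD d then 0 else ∑ c, u (k, c, d)) := by
        simp only [sum_add_distrib, ite_zero_sum]
        exact congrArg _ (sum_congr rfl fun k _ => sum_comm)
    _ ≤ 4 * ε := by linarith

theorem sum_extension_ite [DecidableEq K] {u : K × C × D → ℝ} {κC : C → K} {κD : D → K}
    {u' : K × (K × C) × (K × D) → ℝ}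
    (hu' : ∀ k kc c kd d, u' (k, (kc, c), (kd, d))
      = if kc = κC c ∧ kd = κD d then u (k, c, d) else 0)
    (P : K → K → K → Prop) [∀ k kc kd, Decidable (P k kc kd)] :
    ∑ k, ∑ kc, ∑ c, ∑ kd, ∑ d, (if P k kc kd then u' (k, (kc, c), (kd, d)) else 0)
      = ∑ k, ∑ c, ∑ d, (if P k (κC c) (κD d) then u (k, c, d) else 0) := by
  refine sum_congr rfl fun k _ => ?_
  rw [sum_comm]
  refine sum_congr rfl fun c _ => ?_
  rw [sum_eq_single (κC c) (fun kc _ hkc => sum_eq_zero fun kd _ => sum_eq_zero fun d _ => by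
    simp [hu', hkc]) (by simp), sum_comm]
  refine sum_congr rfl fun d _ => ?_
  rw [sum_eq_single (κD d) (fun kd _ hkd => by simp [hu', hkd]) (by simp), hu']
  simp

/-- The law of `(k_C, c, (k, k_D))` under `u'`, in the shape `ciError` expects. -/
def lawKcCKKd (u' : K × (K × C) × (K × D) → ℝ) (kc : K) (c : C) (y : K × K) : ℝ :=
  ∑ d, u' (y.1, (kc, c), (y.2, d))

theorem ciError_lawKcCKKd (u' : K × (K × C) × (K × D) → ℝ) :
    ciError (lawKcCKKd u') = ∑ kc : K, ∑ c : C, ∑ k : K, ∑ kd : K,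
      |(∑ d, u' (k, (kc, c), (kd, d)))
        - (∑ k', ∑ kd', ∑ d, u' (k', (kc, c), (kd', d)))
          * (∑ c', ∑ d, u' (k, (kc, c'), (kd, d)))
          / (∑ k', ∑ c', ∑ kd', ∑ d, u' (k', (kc, c'), (kd', d)))| := by
  have hN : ∀ kc, ∑ c', ∑ k', ∑ kd', ∑ d, u' (k', (kc, c'), (kd', d))
      = ∑ k', ∑ c', ∑ kd', ∑ d, u' (k', (kc, c'), (kd', d)) := fun kc => sum_comm
  simp only [ciError, lawKcCKKd, Fintype.sum_prod_type, hN]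

theorem sum_lawKcCKKd_ite_eq [DecidableEq K] (u' : K × (K × C) × (K × D) → ℝ) :
    ∑ kc, ∑ c, ∑ y, (if y = (kc, kc) then 0 else lawKcCKKd u' kc c y)
      = ∑ k, ∑ kc, ∑ c, ∑ kd, ∑ d,
        (if kc ≠ k ∨ kd ≠ k then u' (k, (kc, c), (kd, d)) else 0) := by
  symm
  rw [sum_comm]
  refine sum_congr rfl fun kc _ => ?_
  rw [sum_comm]
  refine sum_congr rfl fun c _ => ?_
  rw [Fintype.sum_prod_type]
  refine sum_congr rfl fun k _ => sum_congr rfl fun kd _ => ?_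
  rw [lawKcCKKd, ite_zero_sum]
  exact sum_congr rfl fun d _ => by grind

end Extension

theorem stmt10_general {K C D : Type*} [Fintype K] [Fintype C] [Fintype D] [DecidableEq K]
    (u : K × C × D → ℝ) (hu : IsDist u) (ε : ℝ)
    (κC : C → K) (κD : D → K)
    -- ε-knowledge of the state for player 1:
    (h1 : 1 - ε ≤ ∑ c, if (1 - ε) * (∑ k, ∑ d, u (k, c, d)) ≤ ∑ d, u (κC c, c, d)
        then (∑ k, ∑ d, u (k, c, d)) else 0)
    -- ε-knowledge of the state for player 2:
    (h2 : 1 - ε ≤ ∑ d, if (1 - ε) * (∑ k, ∑ c, u (k, c, d)) ≤ ∑ c, u (κD d, c, d)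
        then (∑ k, ∑ c, u (k, c, d)) else 0)
    (u' : K × (K × C) × (K × D) → ℝ)
    (hu' : ∀ k kc c kd d, u' (k, (kc, c), (kd, d))
      = if kc = κC c ∧ kd = κD d then u (k, c, d) else 0) :
    (∑ k, ∑ kc, ∑ c, ∑ kd, ∑ d,
        (if kc ≠ k ∨ kd ≠ k then u' (k, (kc, c), (kd, d)) else 0)) ≤ 4 * ε ∧
      -- `c` is 16ε-conditionally independent from `(k, k_D)` given `k_C` under `u'`:
      ∑ kc : K, ∑ c : C, ∑ k : K, ∑ kd : K,
          |(∑ d, u' (k, (kc, c), (kd, d)))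
            - (∑ k', ∑ kd', ∑ d, u' (k', (kc, c), (kd', d)))
              * (∑ c', ∑ d, u' (k, (kc, c'), (kd, d)))
              / (∑ k', ∑ c', ∑ kd', ∑ d, u' (k', (kc, c'), (kd', d)))| ≤ 16 * ε := by
  have hmismatch : (∑ k, ∑ kc, ∑ c, ∑ kd, ∑ d,
      (if kc ≠ k ∨ kd ≠ k then u' (k, (kc, c), (kd, d)) else 0)) ≤ 4 * ε :=
    (sum_extension_ite hu' fun k kc kd => kc ≠ k ∨ kd ≠ k).trans_le
      (hu.sum_ite_ne_or_ne_le h1 h2)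
  have hlaw : ∀ kc c y, 0 ≤ lawKcCKKd u' kc c y := fun kc c y => sum_nonneg fun d _ => by
    rw [hu']; split_ifs <;> simp [hu.1]
  refine ⟨hmismatch, ?_⟩
  rw [← ciError_lawKcCKKd]
  linarith [ciError_le hlaw fun kc => (kc, kc), sum_lawKcCKKd_ite_eq u']

theorem stmt10 {K C D : Type*} [Fintype K] [Fintype C] [Fintype D] [DecidableEq K]
    (u : K × C × D → ℝ) (hu : IsDist u) (ε : ℝ) (hε : 0 ≤ ε)
    (κC : C → K) (κD : D → K)
    -- ε-knowledge of the state for player 1: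
    (h1 : 1 - ε ≤ ∑ c, if (1 - ε) * (∑ k, ∑ d, u (k, c, d)) ≤ ∑ d, u (κC c, c, d)
        then (∑ k, ∑ d, u (k, c, d)) else 0)
    -- ε-knowledge of the state for player 2:
    (h2 : 1 - ε ≤ ∑ d, if (1 - ε) * (∑ k, ∑ c, u (k, c, d)) ≤ ∑ c, u (κD d, c, d)
        then (∑ k, ∑ c, u (k, c, d)) else 0)
    (u' : K × (K × C) × (K × D) → ℝ)
    (hu' : ∀ k kc c kd d, u' (k, (kc, c), (kd, d))
      = if kc = κC c ∧ kd = κD d then u (k, c, d) else 0) :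
    (∑ k, ∑ kc, ∑ c, ∑ kd, ∑ d,
        (if kc ≠ k ∨ kd ≠ k then u' (k, (kc, c), (kd, d)) else 0)) ≤ 4 * ε ∧
      -- `c` is 16ε-conditionally independent from `(k, k_D)` given `k_C` under `u'`:
      ∑ kc : K, ∑ c : C, ∑ k : K, ∑ kd : K,
          |(∑ d, u' (k, (kc, c), (kd, d)))
            - (∑ k', ∑ kd', ∑ d, u' (k', (kc, c), (kd', d)))
              * (∑ c', ∑ d, u' (k, (kc, c'), (kd, d)))
              / (∑ k', ∑ c', ∑ kd', ∑ d, u' (k', (kc, c'), (kd', d)))| ≤ 16 * ε :=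
  stmt10_general u hu ε κC κD h1 h2 u' hu'
end
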